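/- Bound on the Gaussian group-max constant ρ(α*): let Z ∼ N_p(0, I_p), let G_1,…,G_J (J ≥ 2) partition {1,…,p} with max group size p_max ≥ 1, and define ρ(α*) = E[max_{j≤J} ‖Z_{(j)}‖_{α*}/√n]. Then for α* ∈ [1,2], ρ(α*) ≤ p_max^{1/α* − 1/2} ((5 p_max/n)^{1/2} + (4 log J/n)^{1/2}). -/

import Mathlib

/-!
Write `S_j = ‖Z_{(j)}‖₂²`. Hölder on a group of at most `p_max` coordinates gives
`‖Z_{(j)}‖_{α*} ≤ p_max^{1/α* - 1/2} √S_j`, and `max_j S_j ≤ 4 log Y` for the soft maximum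
`Y = ∑_j exp (S_j / 4)`. Since `E exp (Z_i² / 4) = √2`, independence gives
`E Y ≤ J · √2^{p_max}`, and Jensen's inequality for the concave functions `√` and `log` yields
`E √(log Y) ≤ √(log E Y) ≤ √(log J + p_max log √2)`; finally `2 log 2 ≤ 5` and
`√(a + b) ≤ √a + √b`.
-/

open MeasureTheory ProbabilityTheory Finset

lemma Real.sum_rpow_rpow_one_div_le_mul_sqrt {ι : Type*} (s : Finset ι) {a : ι → ℝ}
    (ha : ∀ i ∈ s, 0 ≤ a i) {α : ℝ} (hα0 : 0 < α) (hα2 : α ≤ 2) {m : ℕ} (hm : #s ≤ m) :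
    (∑ i ∈ s, a i ^ α) ^ (1 / α) ≤ (m : ℝ) ^ (1 / α - 1 / 2) * √(∑ i ∈ s, a i ^ 2) := by
  have hsum : 0 ≤ ∑ i ∈ s, a i ^ α := sum_nonneg fun i hi => rpow_nonneg (ha i hi) _
  have hHolder : (∑ i ∈ s, a i ^ α) ^ (2 / α) ≤ (#s : ℝ) ^ (2 / α - 1) * ∑ i ∈ s, a i ^ 2 := by
    convert rpow_sum_le_const_mul_sum_rpow_of_nonneg s (p := 2 / α)
      (by rw [le_div_iff₀ hα0]; linarith) (fun i hi => rpow_nonneg (ha i hi) α) using 3 with i hi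
    rw [← rpow_mul (ha i hi), mul_div_cancel₀ _ hα0.ne', rpow_two]
  calc (∑ i ∈ s, a i ^ α) ^ (1 / α) = √((∑ i ∈ s, a i ^ α) ^ (2 / α)) := by
        rw [sqrt_eq_rpow, ← rpow_mul hsum]; ring_nf
    _ ≤ √((#s : ℝ) ^ (2 / α - 1) * ∑ i ∈ s, a i ^ 2) := sqrt_le_sqrt hHolder
    _ = (#s : ℝ) ^ (1 / α - 1 / 2) * √(∑ i ∈ s, a i ^ 2) := by
        rw [sqrt_mul (by positivity), sqrt_eq_rpow, ← rpow_mul (by positivity)]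
        ring_nf
    _ ≤ (m : ℝ) ^ (1 / α - 1 / 2) * √(∑ i ∈ s, a i ^ 2) := by
        gcongr
        rw [sub_nonneg]
        gcongr

lemma Real.le_log_sum_exp {ι : Type*} [Fintype ι] (x : ι → ℝ) (i : ι) :
    x i ≤ log (∑ j, exp (x j)) := by
  rw [le_log_iff_exp_le (sum_pos (fun j _ => exp_pos _) ⟨i, mem_univ i⟩)]
  exact single_le_sum (f := fun j => exp (x j)) (fun j _ => (exp_pos _).le) (mem_univ i)

section GroupNorm

variable {ι κ : Type*} [Fintype ι] [DecidableEq κ] (g : ι → κ)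

def groupSqNorm (x : ι → ℝ) (j : κ) : ℝ :=
  ∑ i ∈ univ.filter (fun i => g i = j), x i ^ 2

lemma groupSqNorm_nonneg (x : ι → ℝ) (j : κ) : 0 ≤ groupSqNorm g x j :=
  sum_nonneg fun _ _ => sq_nonneg _

lemma one_le_sum_exp_groupSqNorm [Fintype κ] [Nonempty κ] (x : ι → ℝ) :
    1 ≤ ∑ j, Real.exp (groupSqNorm g x j / 4) := by
  obtain ⟨j⟩ := ‹Nonempty κ›
  exact (Real.one_le_exp (by have := groupSqNorm_nonneg g x j; positivity)).trans
    (single_le_sum (f := fun j => Real.exp (groupSqNorm g x j / 4))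
      (fun _ _ => (Real.exp_pos _).le) (mem_univ j))

lemma sum_abs_rpow_rpow_one_div_le_sqrt_log_sum_exp [Fintype κ] (x : ι → ℝ) {α : ℝ}
    (hα0 : 0 < α) (hα2 : α ≤ 2) {m : ℕ} {j : κ} (hm : #(univ.filter fun i => g i = j) ≤ m) :
    (∑ i ∈ univ.filter (fun i => g i = j), |x i| ^ α) ^ (1 / α)
      ≤ (m : ℝ) ^ (1 / α - 1 / 2) * (2 * √(Real.log (∑ k, Real.exp (groupSqNorm g x k / 4)))) := by
  have hlog := Real.le_log_sum_exp (fun k => groupSqNorm g x k / 4) j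
  calc _ ≤ (m : ℝ) ^ (1 / α - 1 / 2) * √(groupSqNorm g x j) := by
        simpa only [groupSqNorm, sq_abs] using Real.sum_rpow_rpow_one_div_le_mul_sqrt _
          (fun i _ => abs_nonneg (x i)) hα0 hα2 hm
    _ ≤ _ := by
        gcongr
        have hS := groupSqNorm_nonneg g x j
        rw [Real.sqrt_le_iff, mul_pow, Real.sq_sqrt (by linarith)]
        exact ⟨by positivity, by linarith⟩

end GroupNorm

section Jensen

variable {Ω : Type*} [MeasurableSpace Ω] {μ : Measure Ω} {f : Ω → ℝ}

lemma MeasureTheory.Integrable.sqrt [IsFiniteMeasure μ] (hf : Integrable f μ) :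
    Integrable (fun ω => √(f ω)) μ := by
  refine (hf.norm.add (integrable_const 1)).mono'
    (Real.continuous_sqrt.comp_aestronglyMeasurable hf.aestronglyMeasurable) (ae_of_all _ ?_)
  intro ω
  rw [Pi.add_apply, Real.norm_of_nonneg (Real.sqrt_nonneg _), Real.norm_eq_abs, Real.sqrt_le_iff]
  exact ⟨by positivity, by nlinarith [le_abs_self (f ω), abs_nonneg (f ω)]⟩

lemma MeasureTheory.Integrable.log_of_one_le (hf : Integrable f μ) (h1 : ∀ᵐ ω ∂μ, 1 ≤ f ω) :
    Integrable (fun ω => Real.log (f ω)) μ := by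
  refine hf.mono' (Real.measurable_log.comp_aemeasurable hf.aemeasurable).aestronglyMeasurable ?_
  filter_upwards [h1] with ω hω
  rw [Real.norm_of_nonneg (Real.log_nonneg hω)]
  exact Real.log_le_self (by linarith)

variable [IsProbabilityMeasure μ]

lemma integral_sqrt_le_sqrt_integral (hf : Integrable f μ) (h0 : 0 ≤ᵐ[μ] f) :
    ∫ ω, √(f ω) ∂μ ≤ √(∫ ω, f ω ∂μ) :=
  Real.strictConcaveOn_sqrt.concaveOn.le_map_integral Real.continuous_sqrt.continuousOn
    isClosed_Ici h0 hf hf.sqrt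

lemma integral_log_le_log_integral (hf : Integrable f μ) (h1 : ∀ᵐ ω ∂μ, 1 ≤ f ω) :
    ∫ ω, Real.log (f ω) ∂μ ≤ Real.log (∫ ω, f ω ∂μ) :=
  (strictConcaveOn_log_Ioi.concaveOn.subset (Set.Ici_subset_Ioi.2 one_pos)
      (convex_Ici 1)).le_map_integral
    (Real.continuousOn_log.mono fun _ hx => (zero_lt_one.trans_le hx).ne') isClosed_Ici h1 hf
    (hf.log_of_one_le h1)

lemma integral_sqrt_log_le_sqrt_log_integral (hf : Integrable f μ) (h1 : ∀ᵐ ω ∂μ, 1 ≤ f ω) :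
    ∫ ω, √(Real.log (f ω)) ∂μ ≤ √(Real.log (∫ ω, f ω ∂μ)) :=
  (integral_sqrt_le_sqrt_integral (hf.log_of_one_le h1)
    (h1.mono fun _ => Real.log_nonneg)).trans
    (Real.sqrt_le_sqrt (integral_log_le_log_integral hf h1))

end Jensen

lemma integral_exp_sq_div_four_gaussianReal :
    ∫ x, Real.exp (x ^ 2 / 4) ∂gaussianReal 0 1 = √2 := by
  have hpdf : ∀ x : ℝ, gaussianPDFReal 0 1 x • Real.exp (x ^ 2 / 4)
      = (√(2 * Real.pi))⁻¹ * Real.exp (-4⁻¹ * x ^ 2) := by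
    intro x
    rw [gaussianPDFReal, smul_eq_mul, mul_assoc, ← Real.exp_add]
    simp only [NNReal.coe_one, mul_one, sub_zero]
    ring_nf
  rw [integral_gaussianReal_eq_integral_smul one_ne_zero, integral_congr_ae (ae_of_all _ hpdf),
    integral_const_mul, integral_gaussian, div_inv_eq_mul, Real.sqrt_mul Real.pi_pos.le,
    Real.sqrt_mul zero_le_two, show (4 : ℝ) = 2 * 2 by norm_num, Real.sqrt_mul_self zero_le_two]
  field_simp
  rw [Real.sq_sqrt zero_le_two]

lemma ProbabilityTheory.iIndepFun.integral_finset_prod_comp_of_map_eq {ι Ω β : Type*}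
    [MeasurableSpace Ω] [MeasurableSpace β] {μ : Measure Ω} {ν : Measure β} {X : ι → Ω → β}
    (hX : iIndepFun X μ) (mX : ∀ i, AEMeasurable (X i) μ) (hlaw : ∀ i, μ.map (X i) = ν)
    {f : β → ℝ} (hf : AEStronglyMeasurable f ν) (s : Finset ι) :
    ∫ ω, ∏ i ∈ s, f (X i ω) ∂μ = (∫ x, f x ∂ν) ^ #s := by
  have hXs : iIndepFun (fun i : s => X i) μ := hX.precomp Subtype.val_injective
  simp_rw [← prod_coe_sort s]
  rw [hXs.integral_fun_prod_comp (fun i => mX i) (fun i => hlaw i ▸ hf)]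
  simp_rw [← integral_map (mX _) (hlaw _ ▸ hf), hlaw]
  simp

section Gaussian

variable {Ω ι : Type*} [MeasurableSpace Ω] {μ : Measure Ω} {Z : ι → Ω → ℝ}

lemma integral_exp_sum_sq_div_four (hmeas : ∀ i, Measurable (Z i)) (hindep : iIndepFun Z μ)
    (hlaw : ∀ i, μ.map (Z i) = gaussianReal 0 1) (s : Finset ι) :
    ∫ ω, Real.exp ((∑ i ∈ s, Z i ω ^ 2) / 4) ∂μ = √2 ^ #s := by
  simp_rw [sum_div, Real.exp_sum]
  rw [hindep.integral_finset_prod_comp_of_map_eq (fun i => (hmeas i).aemeasurable) hlaw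
    (f := fun x => Real.exp (x ^ 2 / 4)) (by fun_prop) s, integral_exp_sq_div_four_gaussianReal]

variable [Fintype ι] {κ : Type*} [DecidableEq κ] (g : ι → κ)

lemma integral_exp_groupSqNorm_div_four (hmeas : ∀ i, Measurable (Z i))
    (hindep : iIndepFun Z μ) (hlaw : ∀ i, μ.map (Z i) = gaussianReal 0 1) (j : κ) :
    ∫ ω, Real.exp (groupSqNorm g (Z · ω) j / 4) ∂μ = √2 ^ #(univ.filter fun i => g i = j) :=
  integral_exp_sum_sq_div_four hmeas hindep hlaw _

lemma integrable_exp_groupSqNorm_div_four (hmeas : ∀ i, Measurable (Z i))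
    (hindep : iIndepFun Z μ) (hlaw : ∀ i, μ.map (Z i) = gaussianReal 0 1) (j : κ) :
    Integrable (fun ω => Real.exp (groupSqNorm g (Z · ω) j / 4)) μ :=
  -- the integral was computed without integrability; its nonzero value forces integrability
  Integrable.of_integral_ne_zero <| by
    rw [integral_exp_groupSqNorm_div_four g hmeas hindep hlaw]
    positivity

lemma integral_sum_exp_groupSqNorm_le [Fintype κ] (hmeas : ∀ i, Measurable (Z i))
    (hindep : iIndepFun Z μ) (hlaw : ∀ i, μ.map (Z i) = gaussianReal 0 1) {m : ℕ}
    (hsize : ∀ j, #(univ.filter fun i => g i = j) ≤ m) :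
    ∫ ω, ∑ j, Real.exp (groupSqNorm g (Z · ω) j / 4) ∂μ ≤ Fintype.card κ * √2 ^ m := by
  rw [integral_finsetSum _ fun j _ => integrable_exp_groupSqNorm_div_four g hmeas hindep hlaw j]
  simp_rw [integral_exp_groupSqNorm_div_four g hmeas hindep hlaw]
  calc ∑ j, √2 ^ #(univ.filter fun i => g i = j) ≤ ∑ _j : κ, √2 ^ m :=
        sum_le_sum fun j _ => pow_le_pow_right₀ (Real.one_le_sqrt.2 one_le_two) (hsize j)
    _ = Fintype.card κ * √2 ^ m := by simp

end Gaussian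

lemma two_mul_sqrt_log_mul_sqrt_two_pow_div_le {J : ℕ} (hJ : J ≠ 0) (k n : ℕ) :
    2 * √(Real.log (J * √2 ^ k)) / √n ≤ √(5 * k / n) + √(4 * Real.log J / n) := by
  have hlog : Real.log (J * √2 ^ k) = Real.log J + k * (Real.log 2 / 2) := by
    rw [Real.log_mul (by exact_mod_cast hJ) (by positivity), Real.log_pow,
      Real.log_sqrt zero_le_two]
  have hlog2 : Real.log 2 < 5 / 2 := Real.log_two_lt_d9.trans (by norm_num)
  calc 2 * √(Real.log (J * √2 ^ k)) / √n = √(4 * Real.log (J * √2 ^ k) / n) := by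
        rw [Real.sqrt_div' _ (Nat.cast_nonneg n), Real.sqrt_mul zero_le_four,
          show (4 : ℝ) = 2 ^ 2 by norm_num, Real.sqrt_sq zero_le_two]
    _ ≤ √(5 * k / n + 4 * Real.log J / n) := by
        rw [← add_div, hlog]
        refine Real.sqrt_le_sqrt (div_le_div_of_nonneg_right ?_ (Nat.cast_nonneg n))
        nlinarith [(Nat.cast_nonneg k : (0 : ℝ) ≤ k), Real.log_natCast_nonneg J]
    _ ≤ √(5 * k / n) + √(4 * Real.log J / n) := by
        simp only [Real.sqrt_eq_rpow]
        exact Real.rpow_add_le_add_rpow (by positivity) (by positivity) (by norm_num) (by norm_num)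

/-- Bound on the Gaussian group-max constant ρ(α*): for Z ∼ N_p(0,I_p), groups
G_1,…,G_J (J ≥ 2) partitioning the coordinates with max group size p_max ≥ 1, and
α* ∈ [1,2], one has E[max_j ‖Z_{(j)}‖_{α*}/√n] ≤ p_max^{1/α*−1/2}(√(5p_max/n) + √(4 log J/n)). -/
theorem gaussian_group_max_bound {Ω : Type*} [MeasurableSpace Ω]
    (μ : Measure Ω) [IsProbabilityMeasure μ]
    {p J n : ℕ} (hJ : 2 ≤ J)
    (g : Fin p → Fin J) (pmax : ℕ)
    (hsize : ∀ j, (Finset.univ.filter (fun i => g i = j)).card ≤ pmax)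
    (Z : Fin p → Ω → ℝ) (hmeas : ∀ i, Measurable (Z i))
    (hindep : iIndepFun Z μ)
    (hlaw : ∀ i, Measure.map (Z i) μ = gaussianReal 0 1)
    (αs : ℝ) (hαs : αs ∈ Set.Icc (1 : ℝ) 2)
    (ρ : ℝ)
    (hρ : ρ = ∫ ω, (Finset.univ.sup'
        (⟨⟨0, by omega⟩, Finset.mem_univ _⟩ : (Finset.univ : Finset (Fin J)).Nonempty)
        fun j => (∑ i ∈ Finset.univ.filter (fun i => g i = j), |Z i ω| ^ αs) ^ (1 / αs)
          / Real.sqrt n) ∂μ) :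
    ρ ≤ (pmax : ℝ) ^ (1 / αs - 1 / 2) *
      (Real.sqrt (5 * pmax / n) + Real.sqrt (4 * Real.log J / n)) := by
  have : NeZero J := ⟨by omega⟩
  set C := (pmax : ℝ) ^ (1 / αs - 1 / 2)
  set Y : Ω → ℝ := fun ω => ∑ j, Real.exp (groupSqNorm g (Z · ω) j / 4)
  have hY_int : Integrable Y μ := integrable_finsetSum _ fun j _ =>
    integrable_exp_groupSqNorm_div_four g hmeas hindep hlaw j
  have hY_one : ∀ᵐ ω ∂μ, 1 ≤ Y ω := ae_of_all _ fun ω => one_le_sum_exp_groupSqNorm g _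
  have hEY : ∫ ω, Y ω ∂μ ≤ J * √2 ^ pmax := by
    simpa using integral_sum_exp_groupSqNorm_le g hmeas hindep hlaw hsize
  have hEY_pos : 0 < ∫ ω, Y ω ∂μ :=
    zero_lt_one.trans_le (by simpa using integral_mono_ae (integrable_const 1) hY_int hY_one)
  calc ρ ≤ ∫ ω, C * (2 * √(Real.log (Y ω))) / √n ∂μ := by
        rw [hρ]
        refine integral_mono_of_nonneg (ae_of_all _ fun ω => ?_)
          ((((hY_int.log_of_one_le hY_one).sqrt).const_mul 2).const_mul C |>.div_const _)
          (ae_of_all _ fun ω => sup'_le _ _ fun j _ => ?_)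
        · exact le_sup'_of_le _ (mem_univ 0) (by positivity)
        · exact div_le_div_of_nonneg_right (sum_abs_rpow_rpow_one_div_le_sqrt_log_sum_exp g _
            (by linarith [hαs.1]) hαs.2 (hsize j)) (Real.sqrt_nonneg _)
    _ = C * (2 * ∫ ω, √(Real.log (Y ω)) ∂μ) / √n := by
        rw [integral_div, integral_const_mul, integral_const_mul]
    _ ≤ C * (2 * √(Real.log (J * √2 ^ pmax))) / √n := by
        gcongr
        exact (integral_sqrt_log_le_sqrt_log_integral hY_int hY_one).trans
          (Real.sqrt_le_sqrt (Real.log_le_log hEY_pos hEY))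
    _ ≤ C * (√(5 * pmax / n) + √(4 * Real.log J / n)) := by
        rw [mul_div_assoc]
        gcongr
        exact two_mul_sqrt_log_mul_sqrt_two_pow_div_le (by omega) pmax n
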